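/- Let 1<p,q<∞ with 1/p+1/q=1, let μ be a compactly supported Borel probability measure on ℝ with support in [-M,M], and let Λ = {λ_n}, Ω = {ω_n} ⊂ ℝ with |λ_n − ω_n| ≤ C for all n. If {e_{λ_n}} is a q-frame for L^p(μ) with bounds A, B, and C is small enough that A^{1/q} − (B(e^{C^p}−1)^{q−1}(e^{(2πM)^q}−1))^{1/q} > 0, then {e_{ω_n}} is a q-frame for L^p(μ) with lower bound (A^{1/q} − (B(e^{C^p}−1)^{q−1}(e^{(2πM)^q}−1))^{1/q})^q. -/

import Mathlib

/-!
Write `ω_n = λ_n - δ_n`. Expanding `e^{2πi δ_n x}` in its power series gives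
`(f dμ)^(ω_n) - (f dμ)^(λ_n) = ∑_{k ≥ 1} (2πi δ_n)^k / k! · (x^k f dμ)^(λ_n)`.
Splitting `1/k! = k!^{-1/p} · k!^{-1/q}` and applying Hölder bounds the `q`-th power of this
difference by `(e^{|δ_n|^p} - 1)^{q-1} ∑_k (2π)^{qk} / k! · |(x^k f dμ)^(λ_n)|^q`. Summing over `n`
and applying the upper frame bound to `x^k f`, whose `L^p(μ)` norm is at most `M^k ‖f‖_p`, bounds
the `ℓ^q` norm of the differences by `R^{1/q} ‖f‖_p` with
`R = B (e^{C^p} - 1)^{q-1} (e^{(2πM)^q} - 1)`; Minkowski's inequality in `ℓ^q` then perturbs both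
frame bounds by `R^{1/q}`.
-/

open MeasureTheory Complex Filter
open scoped ENNReal NNReal Real

/-- The Fourier transform of the measure `f dμ` on `ℝ` at `t`. -/
noncomputable def FT1 (μ : Measure ℝ) (f : ℝ → ℂ) (t : ℝ) : ℂ :=
  ∫ x, f x * Complex.exp (-(2 * Real.pi * t * x : ℝ) * Complex.I) ∂μ

open scoped Nat

namespace ENNReal

theorem tsum_mul_le_Lp_mul_Lq {ι : Type*} [Countable ι] {p q : ℝ} (hpq : p.HolderConjugate q)
    (u v : ι → ℝ≥0∞) :
    ∑' i, u i * v i ≤ (∑' i, u i ^ p) ^ (1 / p) * (∑' i, v i ^ q) ^ (1 / q) := by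
  let _ : MeasurableSpace ι := ⊤
  simpa [lintegral_count] using lintegral_mul_le_Lp_mul_Lq .count hpq
    (measurable_from_top (f := u)).aemeasurable (measurable_from_top (f := v)).aemeasurable

theorem tsum_Lp_add_le {ι : Type*} [Countable ι] {p : ℝ} (hp : 1 ≤ p) (u v : ι → ℝ≥0∞) :
    (∑' i, (u i + v i) ^ p) ^ (1 / p) ≤
      (∑' i, u i ^ p) ^ (1 / p) + (∑' i, v i ^ p) ^ (1 / p) := by
  let _ : MeasurableSpace ι := ⊤
  simpa [lintegral_count] using lintegral_Lp_add_le (μ := .count)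
    (measurable_from_top (f := u)).aemeasurable (measurable_from_top (f := v)).aemeasurable hp

theorem tsum_ofReal_pow_succ_div_factorial {x : ℝ} (hx : 0 ≤ x) :
    ∑' k : ℕ, ENNReal.ofReal (x ^ (k + 1) / (k + 1)!) = ENNReal.ofReal (Real.exp x - 1) := by
  have hexp : HasSum (fun k : ℕ => x ^ k / k !) (Real.exp x) := by
    simpa [Real.exp_eq_exp_ℝ] using NormedSpace.expSeries_div_hasSum_exp (𝔸 := ℝ) x
  rw [← ENNReal.ofReal_tsum_of_nonneg (fun _ => by positivity)
    ((summable_nat_add_iff 1).2 hexp.summable)]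
  congr 1
  simpa using ((hasSum_nat_add_iff' 1).2 hexp).tsum_eq

theorem ofReal_pow_div_rpow_one_div_rpow {x m r : ℝ} (hx : 0 ≤ x) (hm : 0 ≤ m) (hr : 0 < r)
    (n : ℕ) : ENNReal.ofReal (x ^ n / m ^ (1 / r)) ^ r = ENNReal.ofReal ((x ^ r) ^ n / m) := by
  rw [ENNReal.ofReal_rpow_of_nonneg (by positivity) hr.le,
    Real.div_rpow (by positivity) (by positivity), ← Real.rpow_mul hm,
    one_div_mul_cancel hr.ne', Real.rpow_one, Real.rpow_pow_comm hx]

theorem tsum_ofReal_pow_succ_div_factorial_mul_rpow_le {p q : ℝ} (hpq : p.HolderConjugate q)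
    {c δ : ℝ} (hc : 0 ≤ c) (hδ : 0 ≤ δ) (a : ℕ → ℝ≥0∞) :
    (∑' k : ℕ, ENNReal.ofReal ((c * δ) ^ (k + 1) / (k + 1)!) * a k) ^ q ≤
      ENNReal.ofReal ((Real.exp (δ ^ p) - 1) ^ (q - 1)) *
        ∑' k : ℕ, ENNReal.ofReal ((c ^ q) ^ (k + 1) / (k + 1)!) * a k ^ q := by
  have hp := hpq.pos
  have hq := hpq.symm.pos
  set u : ℕ → ℝ≥0∞ := fun k => ENNReal.ofReal (δ ^ (k + 1) / ((k + 1)! : ℝ) ^ (1 / p))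
  set v : ℕ → ℝ≥0∞ := fun k => ENNReal.ofReal (c ^ (k + 1) / ((k + 1)! : ℝ) ^ (1 / q)) * a k
  have huv (k : ℕ) : ENNReal.ofReal ((c * δ) ^ (k + 1) / (k + 1)!) * a k = u k * v k := by
    have h1 : 1 / p + 1 / q = 1 := by simpa using hpq.one_div_add_one_div
    rw [← mul_assoc, ← ENNReal.ofReal_mul (by positivity)]
    congr 2
    rw [div_mul_div_comm, ← Real.rpow_add (by positivity), h1, Real.rpow_one, mul_pow,
      mul_comm (δ ^ _)]
  have hu : ∑' k, u k ^ p = ENNReal.ofReal (Real.exp (δ ^ p) - 1) := by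
    simp only [u, ofReal_pow_div_rpow_one_div_rpow hδ (Nat.cast_nonneg _) hp]
    exact tsum_ofReal_pow_succ_div_factorial (by positivity)
  have hv (k : ℕ) : v k ^ q = ENNReal.ofReal ((c ^ q) ^ (k + 1) / (k + 1)!) * a k ^ q := by
    rw [ENNReal.mul_rpow_of_nonneg _ _ hq.le,
      ofReal_pow_div_rpow_one_div_rpow hc (Nat.cast_nonneg _) hq]
  rw [tsum_congr huv]
  calc (∑' k, u k * v k) ^ q ≤ ((∑' k, u k ^ p) ^ (1 / p) * (∑' k, v k ^ q) ^ (1 / q)) ^ q := by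
        gcongr
        exact tsum_mul_le_Lp_mul_Lq hpq u v
    _ = ENNReal.ofReal (Real.exp (δ ^ p) - 1) ^ (q / p) * ∑' k, v k ^ q := by
        rw [ENNReal.mul_rpow_of_nonneg _ _ hq.le, ← ENNReal.rpow_mul, ← ENNReal.rpow_mul,
          one_div_mul_cancel hq.ne', ENNReal.rpow_one, one_div_mul_eq_div, hu]
    _ = _ := by
        rw [tsum_congr hv, ENNReal.ofReal_rpow_of_nonneg _ (by positivity),
          hpq.symm.div_conj_eq_sub_one]
        linarith [Real.add_one_le_exp (δ ^ p), Real.rpow_nonneg hδ p]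

theorem ofReal_rpow_mul_rpow {a q : ℝ} (ha : 0 ≤ a) (hq : 0 ≤ q) (N : ℝ≥0∞) :
    ENNReal.ofReal (a ^ q) * N ^ q = (ENNReal.ofReal a * N) ^ q := by
  rw [ENNReal.mul_rpow_of_nonneg _ _ hq, ENNReal.ofReal_rpow_of_nonneg ha hq]

theorem ofReal_mul_rpow_eq {a q : ℝ} (ha : 0 ≤ a) (hq : 0 < q) (N : ℝ≥0∞) :
    ENNReal.ofReal a * N ^ q = (ENNReal.ofReal (a ^ (1 / q)) * N) ^ q := by
  rw [← ofReal_rpow_mul_rpow (by positivity) hq.le, ← Real.rpow_mul ha,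
    one_div_mul_cancel hq.ne', Real.rpow_one]

theorem ofReal_mul_rpow_le_iff {a q : ℝ} (ha : 0 ≤ a) (hq : 0 < q) (N S : ℝ≥0∞) :
    ENNReal.ofReal a * N ^ q ≤ S ↔ ENNReal.ofReal (a ^ (1 / q)) * N ≤ S ^ (1 / q) := by
  rw [ofReal_mul_rpow_eq ha hq, one_div, le_rpow_inv_iff hq]

theorem le_ofReal_mul_rpow_iff {a q : ℝ} (ha : 0 ≤ a) (hq : 0 < q) (N S : ℝ≥0∞) :
    S ≤ ENNReal.ofReal a * N ^ q ↔ S ^ (1 / q) ≤ ENNReal.ofReal (a ^ (1 / q)) * N := by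
  rw [ofReal_mul_rpow_eq ha hq, one_div, rpow_inv_le_iff hq]

end ENNReal

section LqPerturbation

variable {ι E : Type*} [Countable ι] [NormedAddCommGroup E] {q : ℝ}

theorem tsum_enorm_rpow_le_add_sub (hq : 1 ≤ q) (u v : ι → E) :
    (∑' i, ‖v i‖ₑ ^ q) ^ (1 / q) ≤
      (∑' i, ‖u i‖ₑ ^ q) ^ (1 / q) + (∑' i, ‖v i - u i‖ₑ ^ q) ^ (1 / q) := by
  refine le_trans ?_ (ENNReal.tsum_Lp_add_le hq _ _)
  gcongr with i
  simpa using enorm_add_le (u i) (v i - u i)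

theorem ofReal_mul_rpow_le_tsum_enorm_rpow_of_sub (hq : 1 ≤ q) {u v : ι → E} {N : ℝ≥0∞}
    (hN : N ≠ ⊤) {a r : ℝ} (ha : 0 ≤ a) (hr : 0 ≤ r) (hra : r ^ (1 / q) ≤ a ^ (1 / q))
    (hu : ENNReal.ofReal a * N ^ q ≤ ∑' i, ‖u i‖ₑ ^ q)
    (hvu : ∑' i, ‖v i - u i‖ₑ ^ q ≤ ENNReal.ofReal r * N ^ q) :
    ENNReal.ofReal ((a ^ (1 / q) - r ^ (1 / q)) ^ q) * N ^ q ≤ ∑' i, ‖v i‖ₑ ^ q := by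
  have hq0 : 0 < q := by linarith
  rw [ENNReal.ofReal_rpow_mul_rpow (sub_nonneg.2 hra) hq0.le, ← ENNReal.le_rpow_inv_iff hq0,
    ← one_div, ENNReal.ofReal_sub _ (by positivity), ENNReal.sub_mul fun _ _ => hN,
    tsub_le_iff_right]
  rw [ENNReal.ofReal_mul_rpow_le_iff ha hq0] at hu
  rw [ENNReal.le_ofReal_mul_rpow_iff hr hq0] at hvu
  calc ENNReal.ofReal (a ^ (1 / q)) * N
      ≤ (∑' i, ‖u i‖ₑ ^ q) ^ (1 / q) := hu
    _ ≤ (∑' i, ‖v i‖ₑ ^ q) ^ (1 / q) + (∑' i, ‖u i - v i‖ₑ ^ q) ^ (1 / q) :=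
      tsum_enorm_rpow_le_add_sub hq v u
    _ ≤ (∑' i, ‖v i‖ₑ ^ q) ^ (1 / q) + ENNReal.ofReal (r ^ (1 / q)) * N := by
      simpa only [enorm_sub_rev] using add_le_add_right hvu _

theorem tsum_enorm_rpow_le_ofReal_mul_rpow_of_sub (hq : 1 ≤ q) {u v : ι → E} {N : ℝ≥0∞}
    {b r : ℝ} (hb : 0 ≤ b) (hr : 0 ≤ r)
    (hu : ∑' i, ‖u i‖ₑ ^ q ≤ ENNReal.ofReal b * N ^ q)
    (hvu : ∑' i, ‖v i - u i‖ₑ ^ q ≤ ENNReal.ofReal r * N ^ q) :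
    ∑' i, ‖v i‖ₑ ^ q ≤ ENNReal.ofReal ((b ^ (1 / q) + r ^ (1 / q)) ^ q) * N ^ q := by
  have hq0 : 0 < q := by linarith
  rw [ENNReal.ofReal_rpow_mul_rpow (by positivity) hq0.le, ← ENNReal.rpow_inv_le_iff hq0,
    ← one_div, ENNReal.ofReal_add (by positivity) (by positivity), add_mul]
  rw [ENNReal.le_ofReal_mul_rpow_iff hb hq0] at hu
  rw [ENNReal.le_ofReal_mul_rpow_iff hr hq0] at hvu
  exact (tsum_enorm_rpow_le_add_sub hq u v).trans (add_le_add hu hvu)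

end LqPerturbation

section BoundedSupport

variable {μ : Measure ℝ} {M : ℝ}

theorem ae_norm_ofReal_pow_mul_le (hμ : ∀ᵐ x ∂μ, |x| ≤ M) (f : ℝ → ℂ) (k : ℕ) :
    ∀ᵐ x : ℝ ∂μ, ‖(x : ℂ) ^ k * f x‖ ≤ M ^ k * ‖f x‖ := by
  filter_upwards [hμ] with x hx
  rw [norm_mul, norm_pow, Complex.norm_real, Real.norm_eq_abs]
  gcongr

theorem MeasureTheory.MemLp.ofReal_pow_mul (hμ : ∀ᵐ x ∂μ, |x| ≤ M) {p : ℝ≥0∞} {f : ℝ → ℂ}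
    (hf : MemLp f p μ) (k : ℕ) : MemLp (fun x : ℝ => (x : ℂ) ^ k * f x) p μ :=
  hf.of_le_mul ((by fun_prop : Continuous fun x : ℝ => (x : ℂ) ^ k).aestronglyMeasurable.mul hf.1)
    (ae_norm_ofReal_pow_mul_le hμ f k)

theorem eLpNorm_ofReal_pow_mul_le (hμ : ∀ᵐ x ∂μ, |x| ≤ M) (p : ℝ≥0∞) (f : ℝ → ℂ) (k : ℕ) :
    eLpNorm (fun x : ℝ => (x : ℂ) ^ k * f x) p μ ≤ ENNReal.ofReal (M ^ k) * eLpNorm f p μ :=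
  eLpNorm_le_mul_eLpNorm_of_ae_le_mul (ae_norm_ofReal_pow_mul_le hμ f k) p

theorem hasSum_integral_cexp_mul (hμ : ∀ᵐ x ∂μ, |x| ≤ M) {g : ℝ → ℂ} (hg : Integrable g μ)
    (z : ℂ) :
    HasSum (fun k : ℕ => z ^ k / k ! * ∫ x : ℝ, (x : ℂ) ^ k * g x ∂μ)
      (∫ x, cexp (z * x) * g x ∂μ) := by
  have hint (k : ℕ) : Integrable (fun x : ℝ => (x : ℂ) ^ k * g x) μ :=
    memLp_one_iff_integrable.1 ((memLp_one_iff_integrable.2 hg).ofReal_pow_mul hμ k)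
  have hmoment (k : ℕ) : ∫ x : ℝ, ‖(x : ℂ) ^ k * g x‖ ∂μ ≤ M ^ k * ∫ x, ‖g x‖ ∂μ := by
    rw [← integral_const_mul]
    exact integral_mono_ae (hint k).norm (hg.norm.const_mul _) (ae_norm_ofReal_pow_mul_le hμ g k)
  have hsum : Summable fun k : ℕ => ∫ x : ℝ, ‖z ^ k / k ! * ((x : ℂ) ^ k * g x)‖ ∂μ := by
    refine .of_nonneg_of_le (fun k => integral_nonneg fun x => norm_nonneg _) (fun k => ?_)
      ((Real.summable_pow_div_factorial (‖z‖ * M)).mul_right (∫ x, ‖g x‖ ∂μ))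
    simp only [norm_mul (z ^ k / k !), integral_const_mul, norm_div, norm_pow,
      Complex.norm_natCast]
    calc ‖z‖ ^ k / k ! * ∫ x : ℝ, ‖(x : ℂ) ^ k * g x‖ ∂μ
        ≤ ‖z‖ ^ k / k ! * (M ^ k * ∫ x, ‖g x‖ ∂μ) := by gcongr; exact hmoment k
      _ = (‖z‖ * M) ^ k / k ! * ∫ x, ‖g x‖ ∂μ := by ring
  have hexp (x : ℝ) : ∑' k : ℕ, z ^ k / k ! * ((x : ℂ) ^ k * g x) = cexp (z * x) * g x := by
    rw [Complex.exp_eq_exp_ℂ, ← (NormedSpace.expSeries_div_hasSum_exp (z * x)).tsum_eq,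
      ← tsum_mul_right]
    congr 1 with k
    ring
  simpa only [integral_const_mul, hexp] using
    hasSum_integral_of_summable_integral_norm (fun k => (hint k).const_mul (z ^ k / k !)) hsum

variable {p q : ℝ}

theorem FT1_sub_eq_tsum (hμ : ∀ᵐ x ∂μ, |x| ≤ M) {f : ℝ → ℂ} (hf : Integrable f μ) (l w : ℝ) :
    FT1 μ f w - FT1 μ f l = ∑' k : ℕ, (((2 * π * (l - w) : ℝ) : ℂ) * I) ^ (k + 1) / (k + 1)! *
      FT1 μ (fun x : ℝ => (x : ℂ) ^ (k + 1) * f x) l := by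
  set z : ℂ := ((2 * π * (l - w) : ℝ) : ℂ) * I with hz
  have hint : Integrable (fun x => f x * cexp (-(2 * π * l * x : ℝ) * I)) μ :=
    hf.mul_bdd (by fun_prop) (c := 1) (ae_of_all _ fun x => by
      rw [← Complex.ofReal_neg, Complex.norm_exp_ofReal_mul_I])
  have hsum := hasSum_integral_cexp_mul hμ hint z
  have hmoment (k : ℕ) : ∫ x : ℝ, (x : ℂ) ^ k * (f x * cexp (-(2 * π * l * x : ℝ) * I)) ∂μ =
      FT1 μ (fun x : ℝ => (x : ℂ) ^ k * f x) l := by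
    simp only [FT1, mul_assoc]
  have hshift (x : ℝ) : cexp (z * x) * (f x * cexp (-(2 * π * l * x : ℝ) * I)) =
      f x * cexp (-(2 * π * w * x : ℝ) * I) := by
    rw [mul_left_comm, ← Complex.exp_add, hz]
    congr 2
    push_cast
    ring
  simp only [hmoment, hshift] at hsum
  change HasSum _ (FT1 μ f w) at hsum
  rw [((hasSum_nat_add_iff' 1).2 hsum).tsum_eq]
  simp

theorem enorm_FT1_sub_rpow_le (hpq : p.HolderConjugate q) (hμ : ∀ᵐ x ∂μ, |x| ≤ M) {f : ℝ → ℂ}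
    (hf : Integrable f μ) (l w : ℝ) :
    ‖FT1 μ f w - FT1 μ f l‖ₑ ^ q ≤ ENNReal.ofReal ((Real.exp (|l - w| ^ p) - 1) ^ (q - 1)) *
      ∑' k : ℕ, ENNReal.ofReal (((2 * π) ^ q) ^ (k + 1) / (k + 1)!) *
        ‖FT1 μ (fun x : ℝ => (x : ℂ) ^ (k + 1) * f x) l‖ₑ ^ q := by
  have hcoeff (k : ℕ) : ‖(((2 * π * (l - w) : ℝ) : ℂ) * I) ^ (k + 1) / ((k + 1)! : ℂ)‖ₑ =
      ENNReal.ofReal ((2 * π * |l - w|) ^ (k + 1) / (k + 1)!) := by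
    rw [← ofReal_norm, norm_div, norm_pow, norm_mul, Complex.norm_real, Complex.norm_I, mul_one,
      Real.norm_eq_abs, abs_mul, abs_of_pos Real.two_pi_pos, Complex.norm_natCast]
  calc ‖FT1 μ f w - FT1 μ f l‖ₑ ^ q
      ≤ (∑' k : ℕ, ENNReal.ofReal ((2 * π * |l - w|) ^ (k + 1) / (k + 1)!) *
          ‖FT1 μ (fun x : ℝ => (x : ℂ) ^ (k + 1) * f x) l‖ₑ) ^ q := by
        refine ENNReal.rpow_le_rpow ?_ hpq.symm.nonneg
        rw [FT1_sub_eq_tsum hμ hf]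
        refine enorm_tsum_le_tsum_enorm.trans_eq (tsum_congr fun k => ?_)
        rw [enorm_mul, hcoeff]
    _ ≤ _ := ENNReal.tsum_ofReal_pow_succ_div_factorial_mul_rpow_le hpq Real.two_pi_pos.le
        (abs_nonneg _) _

theorem tsum_tsum_enorm_FT1_pow_mul_rpow_le (hμ : ∀ᵐ x ∂μ, |x| ≤ M) (hM : 0 ≤ M)
    {lam : ℕ → ℝ} {B : ℝ} {r : ℝ≥0∞}
    (hupper : ∀ g : ℝ → ℂ, MemLp g r μ → ∑' n, ‖FT1 μ g (lam n)‖ₑ ^ q ≤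
      ENNReal.ofReal B * eLpNorm g r μ ^ q)
    (hq : 0 ≤ q) {f : ℝ → ℂ} (hf : MemLp f r μ) :
    ∑' n, ∑' k : ℕ, ENNReal.ofReal (((2 * π) ^ q) ^ (k + 1) / (k + 1)!) *
        ‖FT1 μ (fun x : ℝ => (x : ℂ) ^ (k + 1) * f x) (lam n)‖ₑ ^ q ≤
      ENNReal.ofReal B * eLpNorm f r μ ^ q * ENNReal.ofReal (Real.exp ((2 * π * M) ^ q) - 1) := by
  have hmoment (k : ℕ) : ∑' n, ‖FT1 μ (fun x : ℝ => (x : ℂ) ^ k * f x) (lam n)‖ₑ ^ q ≤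
      ENNReal.ofReal B * eLpNorm f r μ ^ q * ENNReal.ofReal ((M ^ q) ^ k) := by
    refine (hupper _ (hf.ofReal_pow_mul hμ k)).trans ?_
    rw [mul_assoc, Real.rpow_pow_comm hM, mul_comm (_ ^ q),
      ENNReal.ofReal_rpow_mul_rpow (by positivity) hq]
    gcongr
    exact eLpNorm_ofReal_pow_mul_le hμ r f k
  rw [ENNReal.tsum_comm]
  simp only [ENNReal.tsum_mul_left]
  calc _ ≤ ∑' k : ℕ, ENNReal.ofReal (((2 * π) ^ q) ^ (k + 1) / (k + 1)!) *
          (ENNReal.ofReal B * eLpNorm f r μ ^ q * ENNReal.ofReal ((M ^ q) ^ (k + 1))) := by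
        gcongr with k
        exact hmoment (k + 1)
    _ = ENNReal.ofReal B * eLpNorm f r μ ^ q *
          ∑' k : ℕ, ENNReal.ofReal (((2 * π * M) ^ q) ^ (k + 1) / (k + 1)!) := by
        rw [← ENNReal.tsum_mul_left]
        refine tsum_congr fun k => ?_
        rw [mul_comm, mul_assoc, ← ENNReal.ofReal_mul (by positivity),
          Real.mul_rpow (by positivity) hM, mul_pow]
        ring_nf
    _ = _ := by rw [ENNReal.tsum_ofReal_pow_succ_div_factorial (by positivity)]

theorem tsum_enorm_FT1_sub_rpow_le [IsFiniteMeasure μ] (hpq : p.HolderConjugate q)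
    (hμ : ∀ᵐ x ∂μ, |x| ≤ M) (hM : 0 ≤ M) {lam ω : ℕ → ℝ} {B C : ℝ}
    (hclose : ∀ n, |lam n - ω n| ≤ C)
    (hupper : ∀ g : ℝ → ℂ, MemLp g (ENNReal.ofReal p) μ → ∑' n, ‖FT1 μ g (lam n)‖ₑ ^ q ≤
      ENNReal.ofReal B * eLpNorm g (ENNReal.ofReal p) μ ^ q)
    {f : ℝ → ℂ} (hf : MemLp f (ENNReal.ofReal p) μ) :
    ∑' n, ‖FT1 μ f (ω n) - FT1 μ f (lam n)‖ₑ ^ q ≤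
      ENNReal.ofReal (B * (Real.exp (C ^ p) - 1) ^ (q - 1) *
        (Real.exp ((2 * π * M) ^ q) - 1)) * eLpNorm f (ENNReal.ofReal p) μ ^ q := by
  have hC : 0 ≤ C := (abs_nonneg _).trans (hclose 0)
  have hint : Integrable f μ := hf.integrable (ENNReal.one_le_ofReal.2 hpq.lt.le)
  have hpoint (n : ℕ) : ‖FT1 μ f (ω n) - FT1 μ f (lam n)‖ₑ ^ q ≤
      ENNReal.ofReal ((Real.exp (C ^ p) - 1) ^ (q - 1)) *
        ∑' k : ℕ, ENNReal.ofReal (((2 * π) ^ q) ^ (k + 1) / (k + 1)!) *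
          ‖FT1 μ (fun x : ℝ => (x : ℂ) ^ (k + 1) * f x) (lam n)‖ₑ ^ q := by
    refine (enorm_FT1_sub_rpow_le hpq hμ hint (lam n) (ω n)).trans ?_
    gcongr
    · exact sub_nonneg.2 (Real.one_le_exp (by positivity))
    · linarith [hpq.symm.lt]
    · exact hpq.nonneg
    · exact hclose n
  refine (ENNReal.tsum_le_tsum hpoint).trans ?_
  rw [ENNReal.tsum_mul_left]
  refine (mul_le_mul_right (tsum_tsum_enorm_FT1_pow_mul_rpow_le hμ hM hupper
    hpq.symm.nonneg hf) _).trans_eq ?_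
  rw [ENNReal.ofReal_mul' (sub_nonneg.2 (Real.one_le_exp (by positivity))),
    ENNReal.ofReal_mul' (Real.rpow_nonneg (sub_nonneg.2 (Real.one_le_exp (by positivity))) _)]
  ring

end BoundedSupport

/-- Stability of `q`-frames of exponentials: if `{e_{λ_n}}` is a `q`-frame for `L^p(μ)` with
bounds `A, B`, `|λ_n − ω_n| ≤ C`, and `C` is small enough that
`A^{1/q} − (B(e^{C^p}−1)^{q−1}(e^{(2πM)^q}−1))^{1/q} > 0`, then `{e_{ω_n}}` is a `q`-frame
with lower bound `(A^{1/q} − (B(e^{C^p}−1)^{q−1}(e^{(2πM)^q}−1))^{1/q})^q`. -/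
theorem stmt7 (p q : ℝ) (hp : 1 < p) (hq : 1 < q) (hpq : 1 / p + 1 / q = 1)
    (μ : Measure ℝ) [IsProbabilityMeasure μ] (M : ℝ) (hM : 0 < M)
    (hsupp : μ (Set.Icc (-M) M)ᶜ = 0)
    (lam ω : ℕ → ℝ) (C : ℝ) (hC : 0 < C) (hclose : ∀ n, |lam n - ω n| ≤ C)
    (A B : ℝ) (hA : 0 < A) (hB : 0 < B)
    (hframe : ∀ f : ℝ → ℂ, MemLp f (ENNReal.ofReal p) μ →
      ENNReal.ofReal A * (eLpNorm f (ENNReal.ofReal p) μ) ^ q ≤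
        ∑' n : ℕ, (‖FT1 μ f (lam n)‖₊ : ℝ≥0∞) ^ q ∧
      ∑' n : ℕ, (‖FT1 μ f (lam n)‖₊ : ℝ≥0∞) ^ q ≤
        ENNReal.ofReal B * (eLpNorm f (ENNReal.ofReal p) μ) ^ q)
    (hsmall : 0 < A ^ (1 / q) -
      (B * (Real.exp (C ^ p) - 1) ^ (q - 1) *
        (Real.exp ((2 * Real.pi * M) ^ q) - 1)) ^ (1 / q)) :
    ∃ B' > 0, ∀ f : ℝ → ℂ, MemLp f (ENNReal.ofReal p) μ →
      ENNReal.ofReal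
          ((A ^ (1 / q) -
              (B * (Real.exp (C ^ p) - 1) ^ (q - 1) *
                (Real.exp ((2 * Real.pi * M) ^ q) - 1)) ^ (1 / q)) ^ q) *
          (eLpNorm f (ENNReal.ofReal p) μ) ^ q ≤
        ∑' n : ℕ, (‖FT1 μ f (ω n)‖₊ : ℝ≥0∞) ^ q ∧
      ∑' n : ℕ, (‖FT1 μ f (ω n)‖₊ : ℝ≥0∞) ^ q ≤
        ENNReal.ofReal B' * (eLpNorm f (ENNReal.ofReal p) μ) ^ q := by
  have hpq' : p.HolderConjugate q :=
    Real.holderConjugate_iff.2 ⟨hp, by simpa only [one_div] using hpq⟩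
  have hμ : ∀ᵐ x ∂μ, |x| ≤ M := by
    rw [ae_iff]
    simpa only [abs_le, Set.compl_def, Set.mem_Icc] using hsupp
  set R := B * (Real.exp (C ^ p) - 1) ^ (q - 1) * (Real.exp ((2 * Real.pi * M) ^ q) - 1)
  have hR : 0 ≤ R := by
    have h₁ := Real.one_le_exp (by positivity : 0 ≤ C ^ p)
    have h₂ := Real.one_le_exp (by positivity : 0 ≤ (2 * Real.pi * M) ^ q)
    exact mul_nonneg (mul_nonneg hB.le (Real.rpow_nonneg (by linarith) _)) (by linarith)
  refine ⟨(B ^ (1 / q) + R ^ (1 / q)) ^ q, by positivity, fun f hf => ?_⟩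
  have hdiff := tsum_enorm_FT1_sub_rpow_le hpq' hμ hM.le hclose (fun g hg => (hframe g hg).2) hf
  exact ⟨ofReal_mul_rpow_le_tsum_enorm_rpow_of_sub hq.le hf.eLpNorm_ne_top hA.le hR
      (sub_nonneg.1 hsmall.le) (hframe f hf).1 hdiff,
    tsum_enorm_rpow_le_ofReal_mul_rpow_of_sub hq.le hB.le hR (hframe f hf).2 hdiff⟩
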